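/- For any worms A and B in worm normal form with all modalities ≥ α, exactly one of the following trichotomy cases can fail to be excluded syntactically: either A = B, or A <_α B, or B <_α A (i.e., the relation <_α is total on worm normal forms in 𝕎_α modulo equality). -/

import Mathlib

inductive Formula (L : Type) : Type where
  | bot : Formula L
  | var : Nat → Formula L
  | imp : Formula L → Formula L → Formula L
  | box : L → Formula L → Formula L

namespace Formula

variable {L : Type}

def neg (φ : Formula L) : Formula L := imp φ bot
def top : Formula L := neg bot
def and (φ ψ : Formula L) : Formula L := neg (imp φ ψ.neg)
def or (φ ψ : Formula L) : Formula L := imp φ.neg ψ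
def iff (φ ψ : Formula L) : Formula L := (imp φ ψ).and (imp ψ φ)
def dia (α : L) (φ : Formula L) : Formula L := neg (box α φ.neg)

end Formula

open Formula

/-- Provability in the polymodal provability logic `GLP_Λ` over a linear order. -/
inductive GLP {L : Type} [LinearOrder L] : Formula L → Prop where
  | k1 : ∀ φ ψ : Formula L, GLP (φ.imp (ψ.imp φ))
  | k2 : ∀ φ ψ χ : Formula L, GLP ((φ.imp (ψ.imp χ)).imp ((φ.imp ψ).imp (φ.imp χ)))
  | k3 : ∀ φ ψ : Formula L, GLP ((φ.neg.imp ψ.neg).imp (ψ.imp φ))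
  | dist : ∀ (α : L) (φ ψ : Formula L), GLP ((Formula.box α (φ.imp ψ)).imp ((Formula.box α φ).imp (Formula.box α ψ)))
  | lob : ∀ (α : L) (φ : Formula L), GLP ((Formula.box α ((Formula.box α φ).imp φ)).imp (Formula.box α φ))
  | trans : ∀ (α β : L) (φ : Formula L), α ≤ β → GLP ((Formula.box α φ).imp (Formula.box β (Formula.box α φ)))
  | negintro : ∀ (α β : L) (φ : Formula L), α < β → GLP ((dia α φ).imp (Formula.box β (dia α φ)))
  | mono : ∀ (α β : L) (φ : Formula L), α ≤ β → GLP ((Formula.box α φ).imp (Formula.box β φ))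
  | mp : ∀ φ ψ : Formula L, GLP (φ.imp ψ) → GLP φ → GLP ψ
  | nec : ∀ (α : L) (φ : Formula L), GLP φ → GLP (Formula.box α φ)

/-- The worm (iterated consistency statement) associated to a list of modalities. -/
def worm {L : Type} : List L → Formula L
  | [] => Formula.top
  | α :: w => Formula.dia α (worm w)

/-- `Lt α A B` iff `GLP ⊢ B → ⟨α⟩A`. -/
def Lt {L : Type} [LinearOrder L] (α : L) (A B : List L) : Prop :=
  GLP ((worm B).imp (Formula.dia α (worm A)))

def Le {L : Type} [LinearOrder L] (α : L) (A B : List L) : Prop :=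
  Lt α A B ∨ A = B

/-- Join a list of blocks, separating consecutive blocks by the modality `α`. -/
def joinSep {L : Type} (α : L) : List (List L) → List L
  | [] => []
  | [p] => p
  | p :: ps => p ++ α :: joinSep α ps

/-- Worm normal form. -/
inductive WNF {L : Type} [LinearOrder L] [SuccOrder L] : List L → Prop where
  | nil : WNF []
  | node (α : L) (parts : List (List L))
      (hlen : 2 ≤ parts.length)
      (hmods : ∀ p ∈ parts, ∀ β ∈ p, α < β)
      (hwnf : ∀ p ∈ parts, WNF p)
      (hord : parts.Chain' (Le (Order.succ α)))
      : WNF (joinSep α parts)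

/-!
Induction on `|A| + |B|`. Let `γ` be the least modality occurring in `A` or `B`. A worm in
normal form containing `γ` splits as `A = Â γ p`, where `p`, its last block at `γ`, has all
modalities above `γ` and is `≤_{γ+1}`-above every other block. Because `⟨γ⟩φ → [β]⟨γ⟩φ` for
`γ < β`, any formula proving `⟨γ+1⟩p` and `⟨γ⟩(p T)` proves `⟨γ⟩(A T)`, while `A T` proves
`⟨γ⟩(p T)`. Hence comparing the last blocks `p`, `q` of `A`, `B` decides the comparison of `A`
and `B`; if `p = q` one compares the heads `Â`, `B̂`, and if only `A` contains `γ`, then `B` is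
a single block and is compared with `p`. For this to work the induction carries a stronger
order, stable under lowering the modality and appending a common tail.
-/

section JoinSep

variable {L : Type}

theorem joinSep_cons_of_ne_nil (α : L) (p : List L) {ps : List (List L)} (h : ps ≠ []) :
    joinSep α (p :: ps) = p ++ α :: joinSep α ps := by
  cases ps with
  | nil => exact absurd rfl h
  | cons q qs => rfl

theorem joinSep_append_singleton (α : L) (p : List L) {ps : List (List L)} (h : ps ≠ []) :
    joinSep α (ps ++ [p]) = joinSep α ps ++ α :: p := by
  induction ps with
  | nil => exact absurd rfl h
  | cons q qs ih =>
    rcases eq_or_ne qs [] with rfl | hqs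
    · rfl
    · rw [List.cons_append, joinSep_cons_of_ne_nil α q (by simp), ih hqs,
        joinSep_cons_of_ne_nil α q hqs, List.append_assoc, List.cons_append]

theorem mem_joinSep {α x : L} {ps : List (List L)} (h : x ∈ joinSep α ps) :
    x = α ∨ ∃ p ∈ ps, x ∈ p := by
  induction ps with
  | nil => simp [joinSep] at h
  | cons q qs ih =>
    rcases eq_or_ne qs [] with rfl | hqs
    · exact .inr ⟨q, List.mem_singleton_self q, h⟩
    · rw [joinSep_cons_of_ne_nil α q hqs, List.mem_append, List.mem_cons] at h
      rcases h with h | h | h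
      · exact .inr ⟨q, List.mem_cons_self, h⟩
      · exact .inl h
      · exact (ih h).imp_right fun ⟨p, hp, hx⟩ => ⟨p, List.mem_cons_of_mem q hp, hx⟩

theorem mem_joinSep_of_two_le_length (α : L) {ps : List (List L)} (h : 2 ≤ ps.length) :
    α ∈ joinSep α ps := by
  match ps, h with
  | p :: q :: qs, _ => simp [joinSep_cons_of_ne_nil α p (List.cons_ne_nil q qs)]

end JoinSep

namespace GLP

variable {L : Type} [LinearOrder L] {φ ψ χ θ : Formula L}

theorem imp_self (φ : Formula L) : GLP (φ.imp φ) :=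
  mp _ _ (mp _ _ (k2 φ (φ.imp φ) φ) (k1 φ (φ.imp φ))) (k1 φ φ)

theorem imp_of (ψ : Formula L) (h : GLP φ) : GLP (ψ.imp φ) :=
  mp _ _ (k1 φ ψ) h

theorem imp_trans (h₁ : GLP (φ.imp ψ)) (h₂ : GLP (ψ.imp χ)) : GLP (φ.imp χ) :=
  mp _ _ (mp _ _ (k2 φ ψ χ) (imp_of φ h₂)) h₁

theorem imp_mp (h₁ : GLP (θ.imp (φ.imp ψ))) (h₂ : GLP (θ.imp φ)) : GLP (θ.imp ψ) :=
  mp _ _ (mp _ _ (k2 θ φ ψ) h₁) h₂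

theorem imp_comm (h : GLP (φ.imp (ψ.imp χ))) : GLP (ψ.imp (φ.imp χ)) :=
  imp_trans (k1 ψ φ) (mp _ _ (k2 φ ψ χ) h)

theorem imp_imp_imp_of_imp (θ : Formula L) (h : GLP (φ.imp ψ)) :
    GLP ((θ.imp φ).imp (θ.imp ψ)) :=
  mp _ _ (k2 θ φ ψ) (imp_of θ h)

theorem imp_imp_comm (φ ψ χ : Formula L) :
    GLP ((φ.imp (ψ.imp χ)).imp (ψ.imp (φ.imp χ))) :=
  imp_comm (imp_trans (k1 ψ φ) (imp_comm (k2 φ ψ χ)))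

theorem imp_imp_neg_imp_neg (φ ψ : Formula L) : GLP ((φ.imp ψ).imp (ψ.neg.imp φ.neg)) :=
  imp_comm (imp_trans (k1 ψ.neg φ) (k2 φ ψ bot))

theorem neg_imp_neg (h : GLP (φ.imp ψ)) : GLP (ψ.neg.imp φ.neg) :=
  mp _ _ (imp_imp_neg_imp_neg φ ψ) h

theorem imp_of_neg_imp_neg (h : GLP (φ.neg.imp ψ.neg)) : GLP (ψ.imp φ) :=
  mp _ _ (k3 φ ψ) h

theorem imp_neg_neg (φ : Formula L) : GLP (φ.imp φ.neg.neg) :=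
  imp_comm (imp_self φ.neg)

theorem bot_imp (φ : Formula L) : GLP (bot.imp φ) :=
  imp_of_neg_imp_neg (imp_of φ.neg (imp_self bot))

theorem top_intro : GLP (top : Formula L) :=
  imp_self bot

theorem imp_imp_and (φ ψ : Formula L) : GLP (φ.imp (ψ.imp (φ.and ψ))) :=
  imp_trans (imp_comm (imp_self (φ.imp ψ.neg))) (imp_imp_comm (φ.imp ψ.neg) ψ bot)

theorem and_imp_left (φ ψ : Formula L) : GLP ((φ.and ψ).imp φ) :=
  imp_of_neg_imp_neg (imp_trans (imp_imp_imp_of_imp φ (bot_imp ψ.neg)) (imp_neg_neg _))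

theorem and_imp_right (φ ψ : Formula L) : GLP ((φ.and ψ).imp ψ) :=
  imp_of_neg_imp_neg (imp_trans (k1 ψ.neg φ) (imp_neg_neg _))

theorem box_imp_box (β : L) (h : GLP (φ.imp ψ)) : GLP ((box β φ).imp (box β ψ)) :=
  mp _ _ (dist β φ ψ) (nec β _ h)

theorem dia_imp_dia (β : L) (h : GLP (φ.imp ψ)) : GLP ((dia β φ).imp (dia β ψ)) :=
  neg_imp_neg (box_imp_box β (neg_imp_neg h))

theorem dia_imp_dia_of_le {α β : L} (h : α ≤ β) (φ : Formula L) :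
    GLP ((dia β φ).imp (dia α φ)) :=
  neg_imp_neg (mono α β φ.neg h)

theorem dia_dia_imp_dia (β : L) (φ : Formula L) : GLP ((dia β (dia β φ)).imp (dia β φ)) :=
  neg_imp_neg (imp_trans (trans β β φ.neg le_rfl) (box_imp_box β (imp_neg_neg _)))

theorem imp_dia_trans {β : L} (h₁ : GLP (φ.imp (dia β ψ))) (h₂ : GLP (ψ.imp (dia β χ))) :
    GLP (φ.imp (dia β χ)) :=
  imp_trans h₁ (imp_trans (dia_imp_dia β h₂) (dia_dia_imp_dia β χ))

theorem dia_imp_box_imp_dia_and (β : L) (φ ψ : Formula L) :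
    GLP ((dia β φ).imp ((box β ψ).imp (dia β (φ.and ψ)))) := by
  have h : GLP (ψ.imp ((φ.and ψ).neg.imp φ.neg)) :=
    imp_trans (imp_comm (imp_imp_and φ ψ)) (imp_imp_neg_imp_neg φ (φ.and ψ))
  have hbox : GLP ((box β ψ).imp ((box β (φ.and ψ).neg).imp (box β φ.neg))) :=
    imp_trans (box_imp_box β h) (dist β _ _)
  exact imp_comm (imp_trans hbox (imp_imp_neg_imp_neg _ _))

theorem dia_imp_dia_imp_dia_and_of_lt {γ β : L} (h : γ < β) (φ ψ : Formula L) :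
    GLP ((dia β φ).imp ((dia γ ψ).imp (dia γ (φ.and (dia γ ψ))))) := by
  have hβ : GLP ((dia β φ).imp ((dia γ ψ).imp (dia β (φ.and (dia γ ψ))))) :=
    imp_comm (imp_trans (negintro γ β ψ h) (imp_comm (dia_imp_box_imp_dia_and β φ (dia γ ψ))))
  exact imp_trans hβ (imp_imp_imp_of_imp _ (dia_imp_dia_of_le h.le _))

theorem worm_append_imp_worm (X Y : List L) : GLP ((worm (X ++ Y)).imp (worm X)) := by
  induction X with
  | nil => exact imp_of _ top_intro
  | cons β X ih => exact dia_imp_dia β ih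

theorem worm_append_imp_dia {δ : L} {X : List L} (Y : List L) (hX : X ≠ [])
    (hδ : ∀ β ∈ X, δ ≤ β) : GLP ((worm (X ++ Y)).imp (dia δ (worm Y))) := by
  induction X with
  | nil => exact absurd rfl hX
  | cons β X ih =>
    have hβ := dia_imp_dia_of_le (hδ β List.mem_cons_self) (worm (X ++ Y))
    by_cases hX' : X = []
    · subst hX'
      exact hβ
    · exact imp_dia_trans hβ (ih hX' fun x hx => hδ x (List.mem_cons_of_mem β hx))

theorem worm_and_dia_imp_worm_append_cons {γ : L} {X : List L} (Y : List L)
    (hX : ∀ β ∈ X, γ < β) :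
    GLP (((worm X).and (dia γ (worm Y))).imp (worm (X ++ γ :: Y))) := by
  induction X with
  | nil => exact and_imp_right _ _
  | cons β X ih =>
    have hbox := imp_trans (and_imp_right (worm (β :: X)) _)
      (negintro γ β (worm Y) (hX β List.mem_cons_self))
    have hdia := imp_mp (imp_trans (and_imp_left _ _) (dia_imp_box_imp_dia_and β _ _)) hbox
    exact imp_trans hdia (dia_imp_dia β (ih fun x hx => hX x (List.mem_cons_of_mem β hx)))

theorem imp_dia_worm_append_cons {γ β : L} (hγβ : γ < β) {X Y : List L}
    (hX : ∀ x ∈ X, γ < x) (h₁ : GLP (φ.imp (dia β (worm X))))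
    (h₂ : GLP (φ.imp (dia γ (worm Y)))) : GLP (φ.imp (dia γ (worm (X ++ γ :: Y)))) :=
  imp_trans (imp_mp (imp_trans h₁ (dia_imp_dia_imp_dia_and_of_lt hγβ _ _)) h₂)
    (dia_imp_dia γ (worm_and_dia_imp_worm_append_cons Y hX))

theorem imp_dia_worm_joinSep {γ β : L} (hγβ : γ < β) {R : List L}
    (ps : List (List L)) (hps : ∀ b ∈ ps, (∀ x ∈ b, γ < x) ∧ GLP (φ.imp (dia β (worm b))))
    (hR : GLP (φ.imp (dia γ (worm R)))) :
    GLP (φ.imp (dia γ (worm (joinSep γ (ps ++ [R]))))) := by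
  induction ps with
  | nil => exact hR
  | cons b bs ih =>
    rw [List.cons_append, joinSep_cons_of_ne_nil γ b (by simp)]
    exact imp_dia_worm_append_cons hγβ (hps b List.mem_cons_self).1 (hps b List.mem_cons_self).2
      (ih fun c hc => hps c (List.mem_cons_of_mem b hc))

end GLP

section Order

variable {L : Type} [LinearOrder L] {α : L} {A B C : List L}

theorem Lt.trans (h₁ : Lt α A B) (h₂ : Lt α B C) : Lt α A C :=
  GLP.imp_dia_trans h₂ h₁

theorem Le.trans : Le α A B → Le α B C → Le α A C
  | .inl h₁, .inl h₂ => .inl (h₁.trans h₂)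
  | .inl h₁, .inr rfl => .inl h₁
  | .inr rfl, h₂ => h₂

instance : Trans (Le α) (Le α) (Le α) :=
  ⟨Le.trans⟩

def StrongLt (A B : List L) : Prop :=
  ∀ (δ : L) (T : List L), (∀ x ∈ A, δ ≤ x) → (∀ x ∈ B, δ ≤ x) →
    GLP ((worm (B ++ T)).imp (dia δ (worm (A ++ T))))

theorem StrongLt.lt (h : StrongLt A B) (hA : ∀ x ∈ A, α ≤ x) (hB : ∀ x ∈ B, α ≤ x) :
    Lt α A B := by
  simpa [Lt] using h α [] hA hB

theorem StrongLt.append_right (h : StrongLt A B) (C : List L) : StrongLt (A ++ C) (B ++ C) :=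
  fun δ T hA hB => by
    simpa using h δ (C ++ T) (fun x hx => hA x (List.mem_append_left C hx))
      (fun x hx => hB x (List.mem_append_left C hx))

theorem strongLt_nil_left (hB : B ≠ []) : StrongLt [] B :=
  fun _ T _ hδ => GLP.worm_append_imp_dia T hB hδ

theorem strongLt_of_mem {γ : L} (hγ : γ ∈ A ∨ γ ∈ B)
    (h : ∀ T, GLP ((worm (B ++ T)).imp (dia γ (worm (A ++ T))))) : StrongLt A B :=
  fun _ T hA hB => GLP.imp_trans (h T) (GLP.dia_imp_dia_of_le (hγ.elim (hA γ) (hB γ)) _)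

end Order

section NormalForm

variable {L : Type} [LinearOrder L] [SuccOrder L]

theorem WNF.joinSep_of_ne_nil {α : L} {ps : List (List L)} (hps : ps ≠ [])
    (hmods : ∀ p ∈ ps, ∀ β ∈ p, α < β) (hwnf : ∀ p ∈ ps, WNF p)
    (hord : ps.IsChain (Le (Order.succ α))) : WNF (joinSep α ps) := by
  match ps, hps with
  | [p], _ => exact hwnf p (List.mem_singleton_self p)
  | p :: q :: qs, _ => exact .node α _ (by simp) hmods hwnf hord

/-- `A = Â γ p` with `p` the last block of `A` at its least modality `γ`. The field `imp_dia`
holds because `p` is `≤_{γ+1}`-above every block of `A`. -/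
structure LastBlockDecomp (γ : L) (A Ahead p : List L) : Prop where
  eq : A = Ahead ++ γ :: p
  head_ge : ∀ x ∈ Ahead, γ ≤ x
  last_gt : ∀ x ∈ p, γ < x
  wnf_head : WNF Ahead
  wnf_last : WNF p
  imp_dia : ∀ (φ : Formula L) (T : List L), ¬IsMax γ →
    GLP (φ.imp (dia (Order.succ γ) (worm p))) → GLP (φ.imp (dia γ (worm (p ++ T)))) →
      GLP (φ.imp (dia γ (worm (A ++ T))))

theorem WNF.exists_lastBlockDecomp {γ : L} {A : List L} (hA : WNF A) (hmin : ∀ x ∈ A, γ ≤ x)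
    (hγ : γ ∈ A) : ∃ Ahead p, LastBlockDecomp γ A Ahead p := by
  cases hA with
  | nil => simp at hγ
  | node β parts hlen hmods hwnf hord =>
    obtain rfl : β = γ := by
      rcases mem_joinSep hγ with h | ⟨p, hp, hγp⟩
      · exact h.symm
      · exact absurd (hmods p hp γ hγp) (hmin β (mem_joinSep_of_two_le_length β hlen)).not_gt
    obtain ⟨ps, p, rfl⟩ : ∃ ps p, parts = ps ++ [p] :=
      ⟨_, _, (List.dropLast_append_getLast (List.ne_nil_of_length_pos (by omega))).symm⟩
    have hps : ps ≠ [] := by rintro rfl; simp at hlen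
    have hle : ∀ b ∈ ps, Le (Order.succ β) b p := fun b hb =>
      (List.pairwise_append.1 (List.isChain_iff_pairwise.1 hord)).2.2 b hb p
        (List.mem_singleton_self p)
    refine ⟨joinSep β ps, p, joinSep_append_singleton β p hps, fun x hx => ?_,
      hmods p (by simp), WNF.joinSep_of_ne_nil hps (fun b hb => hmods b (by simp [hb]))
        (fun b hb => hwnf b (by simp [hb])) hord.left_of_append, hwnf p (by simp), ?_⟩
    · rcases mem_joinSep hx with rfl | ⟨b, hb, hxb⟩
      · exact le_rfl
      · exact (hmods b (by simp [hb]) x hxb).le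
    · intro φ T hβ hp hpT
      have hAT : joinSep β (ps ++ [p]) ++ T = joinSep β (ps ++ [p ++ T]) := by
        simp [joinSep_append_singleton β _ hps]
      rw [hAT]
      refine GLP.imp_dia_worm_joinSep (Order.lt_succ_of_not_isMax hβ) ps
        (fun b hb => ⟨hmods b (by simp [hb]), ?_⟩) hpT
      rcases hle b hb with hbp | rfl
      · exact GLP.imp_dia_trans hp hbp
      · exact hp

namespace LastBlockDecomp

variable {γ : L} {A B Ahead Bhead p q : List L}

theorem length_eq (D : LastBlockDecomp γ A Ahead p) :
    A.length = Ahead.length + p.length + 1 := by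
  simp [D.eq]
  omega

theorem mem (D : LastBlockDecomp γ A Ahead p) : γ ∈ A := by
  simp [D.eq]

theorem imp_dia_last (D : LastBlockDecomp γ A Ahead p) (T : List L) :
    GLP ((worm (A ++ T)).imp (dia γ (worm (p ++ T)))) := by
  have hAT : A ++ T = (Ahead ++ [γ]) ++ (p ++ T) := by simp [D.eq]
  rw [hAT]
  refine GLP.worm_append_imp_dia _ (by simp) fun x hx => ?_
  rcases List.mem_append.1 hx with hx | hx
  · exact D.head_ge x hx
  · exact (List.mem_singleton.1 hx).ge

theorem imp_dia_of_strongLt (D : LastBlockDecomp γ A Ahead p) (hq : ∀ x ∈ q, γ < x)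
    (hγ : ¬IsMax γ) (h : StrongLt p q) (T : List L) :
    GLP ((worm (q ++ T)).imp (dia γ (worm (A ++ T)))) := by
  have hsucc : GLP ((worm q).imp (dia (Order.succ γ) (worm p))) := by
    simpa using h (Order.succ γ) [] (fun x hx => Order.succ_le_of_lt (D.last_gt x hx))
      (fun x hx => Order.succ_le_of_lt (hq x hx))
  exact D.imp_dia _ T hγ (GLP.imp_trans (GLP.worm_append_imp_worm q T) hsucc)
    (h γ T (fun x hx => (D.last_gt x hx).le) fun x hx => (hq x hx).le)

theorem strongLt_or_strongLt_of_gt (D : LastBlockDecomp γ A Ahead p) (hB : ∀ x ∈ B, γ < x)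
    (hB₀ : B ≠ []) (hpB : p = B ∨ StrongLt p B ∨ StrongLt B p) :
    StrongLt A B ∨ StrongLt B A := by
  obtain ⟨x, hx⟩ := List.exists_mem_of_ne_nil B hB₀
  rcases hpB with rfl | h | h
  · exact .inr (strongLt_of_mem (.inr D.mem) D.imp_dia_last)
  · exact .inl (strongLt_of_mem (.inl D.mem) (D.imp_dia_of_strongLt hB (not_isMax_of_lt (hB x hx)) h))
  · refine .inr (strongLt_of_mem (.inr D.mem) fun T => GLP.imp_dia_trans (D.imp_dia_last T) ?_)
    exact h γ T (fun x hx => (hB x hx).le) fun x hx => (D.last_gt x hx).le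

theorem strongLt_of_strongLt_last (DA : LastBlockDecomp γ A Ahead p)
    (DB : LastBlockDecomp γ B Bhead q) (hγ : ¬IsMax γ) (h : StrongLt p q) : StrongLt A B :=
  strongLt_of_mem (.inl DA.mem) fun T =>
    GLP.imp_dia_trans (DB.imp_dia_last T) (DA.imp_dia_of_strongLt DB.last_gt hγ h T)

theorem trichotomy (DA : LastBlockDecomp γ A Ahead p) (DB : LastBlockDecomp γ B Bhead q)
    (hpq : p = q ∨ StrongLt p q ∨ StrongLt q p)
    (hhead : p = q → Ahead = Bhead ∨ StrongLt Ahead Bhead ∨ StrongLt Bhead Ahead) :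
    A = B ∨ StrongLt A B ∨ StrongLt B A := by
  by_cases heq : p = q
  · subst heq
    rw [DA.eq, DB.eq]
    rcases hhead rfl with h | h | h
    · exact .inl (by rw [h])
    · exact .inr (.inl (h.append_right _))
    · exact .inr (.inr (h.append_right _))
  · obtain ⟨x, hx⟩ : ∃ x, x ∈ p ++ q :=
      List.exists_mem_of_ne_nil _ fun h => heq <| by
        rw [List.append_eq_nil_iff] at h
        rw [h.1, h.2]
    have hγ : ¬IsMax γ := by
      rcases List.mem_append.1 hx with hx | hx
      · exact not_isMax_of_lt (DA.last_gt x hx)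
      · exact not_isMax_of_lt (DB.last_gt x hx)
    rcases hpq.resolve_left heq with h | h
    · exact .inr (.inl (DA.strongLt_of_strongLt_last DB hγ h))
    · exact .inr (.inr (DB.strongLt_of_strongLt_last DA hγ h))

end LastBlockDecomp

theorem WNF.trichotomy_strongLt {A B : List L} (hA : WNF A) (hB : WNF B) :
    A = B ∨ StrongLt A B ∨ StrongLt B A := by
  induction hn : A.length + B.length using Nat.strong_induction_on generalizing A B with
  | _ n ih =>
  subst hn
  rcases eq_or_ne A [] with rfl | hA₀
  · rcases eq_or_ne B [] with rfl | hB₀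
    · exact .inl rfl
    · exact .inr (.inl (strongLt_nil_left hB₀))
  rcases eq_or_ne B [] with rfl | hB₀
  · exact .inr (.inr (strongLt_nil_left hA₀))
  have hAB : A ++ B ≠ [] := by simp [hA₀]
  set γ := (A ++ B).min hAB
  have hmin : ∀ x ∈ A ++ B, γ ≤ x := fun x hx => List.min_le_of_mem hx
  have hlt {C : List L} (hC : ∀ x ∈ C, x ∈ A ++ B) (hγC : γ ∉ C) : ∀ x ∈ C, γ < x :=
    fun x hx => (hmin x (hC x hx)).lt_of_ne fun h => hγC (h ▸ hx)
  by_cases hγA : γ ∈ A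
  · obtain ⟨Ahead, p, DA⟩ :=
      hA.exists_lastBlockDecomp (fun x hx => hmin x (List.mem_append_left B hx)) hγA
    have hlenA := DA.length_eq
    by_cases hγB : γ ∈ B
    · obtain ⟨Bhead, q, DB⟩ :=
        hB.exists_lastBlockDecomp (fun x hx => hmin x (List.mem_append_right A hx)) hγB
      have hlenB := DB.length_eq
      exact DA.trichotomy DB (ih _ (by omega) DA.wnf_last DB.wnf_last rfl)
        fun _ => ih _ (by omega) DA.wnf_head DB.wnf_head rfl
    · exact .inr (DA.strongLt_or_strongLt_of_gt (hlt (fun x => List.mem_append_right A) hγB) hB₀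
        (ih _ (by omega) DA.wnf_last hB rfl))
  · have hγB : γ ∈ B := (List.mem_append.1 (List.min_mem hAB)).resolve_left hγA
    obtain ⟨Bhead, q, DB⟩ :=
      hB.exists_lastBlockDecomp (fun x hx => hmin x (List.mem_append_right A hx)) hγB
    have hlenB := DB.length_eq
    exact .inr (DB.strongLt_or_strongLt_of_gt (hlt (fun x => List.mem_append_left B) hγA) hA₀
      (ih _ (by omega) DB.wnf_last hA rfl)).symm

end NormalForm

/-- The relation `<_α` is total (as a trichotomy with equality) on worm normal
forms all of whose modalities are `≥ α`. -/
theorem wnf_trichotomy {L : Type} [LinearOrder L] [SuccOrder L] (α : L)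
    (A B : List L)
    (hAm : ∀ β ∈ A, α ≤ β) (hBm : ∀ β ∈ B, α ≤ β)
    (hA : WNF A) (hB : WNF B) :
    A = B ∨ Lt α A B ∨ Lt α B A :=
  (hA.trichotomy_strongLt hB).imp_right
    (Or.imp (fun h => h.lt hAm hBm) fun h => h.lt hBm hAm)
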